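/- arXiv:2304.06347 — 2 statements merged into one kernel-verified Lean document; each statement's English description precedes it below -/
import Mathlib

section
/- Let n ≥ 1 and let m_1, …, m_n be integers with m_i ≥ 2 for all i. Then for every j with 1 ≤ j ≤ n one has det T(m_1, …, m_n) ≥ j · det T(m_j, …, m_n) − (j − 1) · det T(m_{j+1}, …, m_n). (This is the inequality Δ(Γ) ≥ j·Δ(Γ∖\overline{v_1v_{j−1}}) − (j−1)·Δ(Γ∖\overline{v_1v_j}) established by induction in the proof of Lemma 3.3.) -/
def triMat (n : ℕ) (m : ℕ → ℤ) : Matrix (Fin n) (Fin n) ℤ :=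
  fun i j =>
    if (i : ℕ) = (j : ℕ) then m ((i : ℕ) + 1)
    else if (i : ℕ) + 1 = (j : ℕ) ∨ (j : ℕ) + 1 = (i : ℕ) then -1 else 0

/-- The determinant of the `n × n` tridiagonal integer matrix whose diagonal
entries are `m 1, …, m n` (so the `(i,i)` entry, `i : Fin n`, is `m (i+1)`),
whose entries immediately above and below the diagonal are all `-1`, and whose
other entries are `0`.  For `n = 0` this is `1` (determinant of the empty matrix). -/
def tridiagDet (n : ℕ) (m : ℕ → ℤ) : ℤ :=
  Matrix.det (fun i j : Fin n =>
    if (i : ℕ) = (j : ℕ) then m ((i : ℕ) + 1)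
    else if (i : ℕ) + 1 = (j : ℕ) ∨ (j : ℕ) + 1 = (i : ℕ) then -1 else 0)

lemma tridiagDet_eq (n : ℕ) (m : ℕ → ℤ) : tridiagDet n m = (triMat n m).det := rfl

lemma sA1succ (k : ℕ) (i : Fin k) :
    (((Fin.succ (0 : Fin (k+1))).succAbove i.succ : Fin (k+2)) : ℕ) = (i:ℕ)+2 := by
  rw [Fin.succAbove]
  split_ifs with h
  · simp [Fin.lt_def] at h
  · simp

lemma sA1zero (k : ℕ) : (((Fin.succ (0 : Fin (k+1))).succAbove 0 : Fin (k+2)) : ℕ) = 0 := by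
  rw [Fin.succAbove]
  split_ifs with h
  · simp
  · simp [Fin.lt_def] at h

lemma tridiagDet_zero (m : ℕ → ℤ) : tridiagDet 0 m = 1 := by
  rw [tridiagDet_eq]; exact Matrix.det_isEmpty

lemma tridiagDet_one (m : ℕ → ℤ) : tridiagDet 1 m = m 1 := by
  rw [tridiagDet_eq, Matrix.det_fin_one]
  simp [triMat]

lemma tridiagDet_congr (n : ℕ) (f g : ℕ → ℤ) (h : ∀ i, 1 ≤ i → i ≤ n → f i = g i) :
    tridiagDet n f = tridiagDet n g := by
  rw [tridiagDet_eq, tridiagDet_eq]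
  congr 1
  funext i j
  simp only [triMat]
  split_ifs with h1 h2
  · exact h _ (by omega) (by omega)
  · rfl
  · rfl

lemma tridiag_rec (k : ℕ) (f : ℕ → ℤ) :
    tridiagDet (k + 2) f =
      f 1 * tridiagDet (k + 1) (fun i => f (i + 1)) - tridiagDet k (fun i => f (i + 2)) := by
  rw [tridiagDet_eq, show (k + 2) = (k + 1).succ from rfl, Matrix.det_succ_column_zero]
  rw [Fin.sum_univ_succ, Fin.sum_univ_succ]
  have hzero : ∀ i : Fin k,
      (-1 : ℤ) ^ ((i.succ.succ : Fin (k + 2)) : ℕ) *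
          triMat (k + 2) f i.succ.succ 0 *
          Matrix.det ((triMat (k + 2) f).submatrix i.succ.succ.succAbove Fin.succ) = 0 := by
    intro i
    have : triMat (k + 2) f i.succ.succ 0 = 0 := by
      simp only [triMat, Fin.val_succ, Fin.val_zero]
      split_ifs <;> first | rfl | (exfalso; simp_all <;> omega)
    rw [this]; ring
  rw [Finset.sum_congr rfl (fun i _ => hzero i), Finset.sum_const_zero, add_zero]
  have e00 : triMat (k + 2) f 0 0 = f 1 := by simp [triMat]
  have e10 : triMat (k + 2) f (Fin.succ 0) 0 = -1 := by
    simp only [triMat, Fin.val_succ, Fin.val_zero]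
    norm_num
  have hsub0 : (triMat (k + 2) f).submatrix ((0 : Fin (k + 2)).succAbove) Fin.succ =
      triMat (k + 1) (fun i => f (i + 1)) := by
    rw [Fin.succAbove_zero]
    funext i j
    simp only [Matrix.submatrix_apply, triMat, Fin.val_succ]
    split_ifs <;> first | rfl | (congr 1; omega) | omega
  set N : Matrix (Fin (k + 1)) (Fin (k + 1)) ℤ :=
    (triMat (k + 2) f).submatrix ((Fin.succ (0 : Fin (k + 1))).succAbove) Fin.succ with hN
  have hNdet : N.det = - tridiagDet k (fun i => f (i + 2)) := by
    have expand := Matrix.det_succ_row_zero (n := k) N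
    rw [expand, Fin.sum_univ_succ]
    have hz : ∀ j : Fin k,
        (-1 : ℤ) ^ ((j.succ : Fin (k + 1)) : ℕ) * N 0 j.succ *
          Matrix.det (N.submatrix Fin.succ j.succ.succAbove) = 0 := by
      intro j
      have : N 0 j.succ = 0 := by
        simp only [hN, Matrix.submatrix_apply, triMat, sA1zero, Fin.val_succ]
        split_ifs <;> first | rfl | (exfalso; simp_all <;> omega)
      rw [this]; ring
    rw [Finset.sum_congr rfl (fun j _ => hz j), Finset.sum_const_zero, add_zero]
    have hN00 : N 0 0 = -1 := by
      simp only [hN, Matrix.submatrix_apply, triMat, sA1zero, Fin.val_succ, Fin.val_zero]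
      norm_num
    have hminor : N.submatrix Fin.succ ((0 : Fin (k + 1)).succAbove) =
        triMat k (fun i => f (i + 2)) := by
      rw [Fin.succAbove_zero]
      funext i j
      simp only [hN, Matrix.submatrix_apply, triMat, sA1succ, Fin.val_succ]
      split_ifs <;> first | rfl | (congr 1; omega) | omega
    rw [hN00, hminor, tridiagDet_eq]
    norm_num
  rw [e00, e10, hsub0, hNdet]
  simp only [tridiagDet_eq, Fin.val_zero, Fin.val_succ, pow_zero, pow_succ, pow_zero]
  ring

lemma pos_and_mono (k : ℕ) :
    ∀ f : ℕ → ℤ, (∀ i, 1 ≤ i → i ≤ k + 1 → 2 ≤ f i) →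
      1 ≤ tridiagDet k (fun i => f (i + 1)) ∧
        tridiagDet k (fun i => f (i + 1)) + 1 ≤ tridiagDet (k + 1) f := by
  induction k with
  | zero =>
    intro f hf
    rw [tridiagDet_zero, tridiagDet_one]
    exact ⟨le_refl 1, by have := hf 1 le_rfl le_rfl; omega⟩
  | succ k ih =>
    intro f hf
    obtain ⟨h1, h2⟩ := ih (fun i => f (i + 1)) (fun i hi1 hi2 => hf (i + 1) (by omega) (by omega))
    have hrec := tridiag_rec k f
    have hshift : (fun i => (fun i => f (i + 1)) (i + 1)) = (fun i => f (i + 2)) := rfl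
    rw [hshift] at h1 h2
    have hf1 : 2 ≤ f 1 := hf 1 (by omega) (by omega)
    constructor
    · linarith
    · rw [hrec]; nlinarith

lemma tridiag_pos (k : ℕ) (f : ℕ → ℤ) (hf : ∀ i, 1 ≤ i → i ≤ k → 2 ≤ f i) :
    1 ≤ tridiagDet k f := by
  have := (pos_and_mono k (fun i => if i ≤ 1 then 2 else f (i - 1))
    (fun i hi1 hi2 => by
      split_ifs with h
      · norm_num
      · exact hf (i - 1) (by omega) (by omega))).1
  rw [tridiagDet_congr k (fun i => if (i + 1 : ℕ) ≤ 1 then 2 else f (i + 1 - 1)) f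
    (fun i hi1 hi2 => by
      rw [if_neg (by omega : ¬ i + 1 ≤ 1)]
      congr 1)] at this
  exact this


/-- The inequality `Δ(Γ) ≥ j·Δ(Γ∖\overline{v_1v_{j−1}}) − (j−1)·Δ(Γ∖\overline{v_1v_j})`
from the proof of Lemma 3.3: for a chain with weights `m_1, …, m_n`, each `m_i ≥ 2`,
one has `det T(m_1, …, m_n) ≥ j·det T(m_j, …, m_n) − (j−1)·det T(m_{j+1}, …, m_n)`
for all `1 ≤ j ≤ n`. -/
theorem tridiagDet_ge_combination (n : ℕ) (hn : 1 ≤ n) (m : ℕ → ℤ)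
    (hm : ∀ i, 1 ≤ i → i ≤ n → 2 ≤ m i) :
    ∀ j, 1 ≤ j → j ≤ n →
      tridiagDet n m ≥
        (j : ℤ) * tridiagDet (n - j + 1) (fun i => m (j - 1 + i)) -
          ((j : ℤ) - 1) * tridiagDet (n - j) (fun i => m (j + i)) := by
  intro j
  induction j with
  | zero => omega
  | succ j ih =>
    intro hj1 hjn
    rcases Nat.eq_zero_or_pos j with hj0 | hjpos
    · subst hj0
      have h1 : n - 1 + 1 = n := by omega
      have h2 : tridiagDet (n - 1 + 1) (fun i => m (0 + 1 - 1 + i)) = tridiagDet n m := by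
        rw [h1]
        exact tridiagDet_congr n _ m (fun i _ _ => by norm_num)
      push_cast
      rw [h2]
      have := tridiag_pos (n - 1) (fun i => m (0 + 1 + i))
        (fun i hi1 hi2 => hm _ (by omega) (by omega))
      linarith [tridiag_pos n m hm]
    · have ihr := ih (by omega) (by omega)
      set A := tridiagDet (n - j + 1) (fun i => m (j - 1 + i)) with hA
      set B := tridiagDet (n - j) (fun i => m (j + i)) with hB
      have hk : n - j + 1 = (n - j - 1) + 2 := by omega
      have hrec := tridiag_rec (n - j - 1) (fun i => m (j - 1 + i))
      rw [← hk] at hrec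
      have hg1 : m (j - 1 + 1) = m j := by congr 1; omega
      have hsh1 : tridiagDet (n - j - 1 + 1) (fun i => m (j - 1 + (i + 1))) = B := by
        rw [show n - j - 1 + 1 = n - j by omega, hB]
        exact tridiagDet_congr _ _ _ (fun i _ _ => by first | rfl | (congr 1; omega))
      set C := tridiagDet (n - j - 1) (fun i => m (j + 1 + i)) with hC
      have hsh2 : tridiagDet (n - j - 1) (fun i => m (j - 1 + (i + 2))) = C := by
        rw [hC]
        exact tridiagDet_congr _ _ _ (fun i _ _ => by first | rfl | (congr 1; omega))
      rw [hg1, hsh1, hsh2] at hrec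
      have e1 : tridiagDet (n - (j + 1) + 1) (fun i => m (j + 1 - 1 + i)) = B := by
        rw [show n - (j + 1) + 1 = n - j by omega, hB]
        exact tridiagDet_congr _ _ _ (fun i _ _ => by first | rfl | (congr 1; omega))
      have e2 : tridiagDet (n - (j + 1)) (fun i => m (j + 1 + i)) = C := by
        rw [show n - (j + 1) = n - j - 1 by omega]
      rw [e1, e2]
      have hmj : 2 ≤ m j := hm j (by omega) (by omega)
      have hBpos : 1 ≤ B := tridiag_pos _ _ (fun i hi1 hi2 => hm _ (by omega) (by omega))
      have hjc : (1 : ℤ) ≤ (j : ℤ) := by exact_mod_cast hjpos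
      push_cast
      have key : (0 : ℤ) ≤ (j : ℤ) * (m j - 2) * B :=
        mul_nonneg (mul_nonneg (by linarith) (by linarith)) (by linarith)
      nlinarith [ihr, hrec]
end

section
/- Let n ≥ 1 and let m_1, …, m_n be integers with m_i ≥ 2 for all i. Then for every j with 1 ≤ j ≤ n one has det T(m_1, …, m_n) > (j·m_j − 2j + 1) · det T(m_{j+1}, …, m_n). (This is the inequality Δ(Γ) > (j·m_j − 2j + 1)·Δ(Γ∖\overline{v_1v_j}) established in the proof of Lemma 3.3.) -/
section Tridiag

variable {R : Type*} [CommRing R]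

def tridiag (n : ℕ) (m : ℕ → R) : Matrix (Fin n) (Fin n) R :=
  Matrix.of fun i j =>
    if (i : ℕ) = (j : ℕ) then m ((i : ℕ) + 1)
    else if (i : ℕ) + 1 = (j : ℕ) ∨ (j : ℕ) + 1 = (i : ℕ) then -1 else 0

theorem tridiag_submatrix_succ (k : ℕ) (m : ℕ → R) :
    (tridiag (k + 1) m).submatrix Fin.succ Fin.succ = tridiag k (fun i => m (i + 1)) := by
  ext i j
  simp only [tridiag, Matrix.submatrix_apply, Matrix.of_apply, Fin.val_succ]
  split_ifs <;> first | rfl | omega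

/-- The minor at position `(0, 1)`: its first column is `(-1, 0, …, 0)`. -/
theorem det_tridiag_submatrix_succ_succAbove_one (k : ℕ) (m : ℕ → R) :
    ((tridiag (k + 2) m).submatrix Fin.succ (Fin.succAbove 1)).det
      = -(tridiag k (fun i => m (i + 2))).det := by
  rw [Matrix.det_succ_column_zero, Fin.sum_univ_succ, Finset.sum_eq_zero]
  · have hminor : ((tridiag (k + 2) m).submatrix Fin.succ (Fin.succAbove 1)).submatrix
        (Fin.succAbove 0) Fin.succ = tridiag k (fun i => m (i + 2)) := by
      ext i j
      simp [tridiag, Fin.succAbove]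
    have hcorner : (tridiag (k + 2) m).submatrix Fin.succ (Fin.succAbove 1) 0 0 = -1 := by
      simp [tridiag, Fin.succAbove]
    rw [hminor, hcorner]
    simp
  · intro i _
    simp [tridiag, Fin.succAbove]

theorem det_tridiag_succ_succ (k : ℕ) (m : ℕ → R) :
    (tridiag (k + 2) m).det
      = m 1 * (tridiag (k + 1) (fun i => m (i + 1))).det - (tridiag k (fun i => m (i + 2))).det := by
  rw [Matrix.det_succ_row_zero, Fin.sum_univ_succ, Fin.sum_univ_succ, Finset.sum_eq_zero]
  · rw [Fin.succAbove_zero, Fin.succ_zero_eq_one, tridiag_submatrix_succ,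
      det_tridiag_submatrix_succ_succAbove_one]
    have h00 : tridiag (k + 2) m 0 0 = m 1 := by simp [tridiag]
    have h01 : tridiag (k + 2) m 0 1 = -1 := by simp [tridiag]
    simp only [h00, h01, Fin.val_zero, Fin.val_one, pow_zero, pow_one]
    ring
  · intro j _
    simp [tridiag]

end Tridiag

section TailContinuants

variable {R : Type*} [CommRing R] [LinearOrder R] [IsStrictOrderedRing R] {n : ℕ} {m D : ℕ → R}

/-- `D k` plays the role of `det T(m_{k+1}, …, m_n)` for `k ≤ n`; only meaningful for `n ≥ 1`,
since `n - 1` truncates. -/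
structure IsTailContinuants (n : ℕ) (m D : ℕ → R) : Prop where
  recurrence : ∀ k, k + 2 ≤ n → D k = m (k + 1) * D (k + 1) - D (k + 2)
  last : D n = 1
  penultimate : D (n - 1) = m n

namespace IsTailContinuants

theorem one_le_and_le_sub (hD : IsTailContinuants n m D) (hm : ∀ i, 1 ≤ i → i ≤ n → 2 ≤ m i)
    {k : ℕ} (hk : k + 1 ≤ n) :
    1 ≤ D (k + 1) ∧ (m (k + 1) - 2) * D (k + 1) + 1 ≤ D k - D (k + 1) := by
  induction Nat.le_sub_one_of_lt hk using Nat.decreasingInduction with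
  | self =>
    rw [Nat.sub_add_cancel (by omega), hD.last, hD.penultimate]
    constructor <;> linarith
  | of_succ k hk' ih =>
    obtain ⟨hpos, hdiff⟩ := ih (by omega)
    have hm2 := hm (k + 2) (by omega) (by omega)
    have hdiff_pos : 1 ≤ D (k + 1) - D (k + 2) := by nlinarith
    refine ⟨by linarith, ?_⟩
    rw [hD.recurrence k (by omega)]
    nlinarith

theorem sub_succ_le_sub (hD : IsTailContinuants n m D) (hm : ∀ i, 1 ≤ i → i ≤ n → 2 ≤ m i)
    {k : ℕ} (hk : k + 2 ≤ n) :
    D (k + 1) - D (k + 2) ≤ D k - D (k + 1) := by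
  have hpos := (hD.one_le_and_le_sub hm (k := k) (by omega)).1
  have hm1 := hm (k + 1) (by omega) (by omega)
  rw [hD.recurrence k hk]
  nlinarith

theorem succ_mul_sub_le_sub_zero (hD : IsTailContinuants n m D)
    (hm : ∀ i, 1 ≤ i → i ≤ n → 2 ≤ m i) {j : ℕ} (hj : j + 1 ≤ n) :
    (j + 1 : R) * (D j - D (j + 1)) ≤ D 0 - D (j + 1) := by
  induction j with
  | zero => simp
  | succ j ih =>
    have hanti := hD.sub_succ_le_sub hm (k := j) hj
    have hprev := ih (by omega)
    push_cast
    nlinarith [(Nat.cast_nonneg j : (0 : R) ≤ j)]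

theorem weighted_mul_lt_head (hD : IsTailContinuants n m D) (hm : ∀ i, 1 ≤ i → i ≤ n → 2 ≤ m i)
    {j : ℕ} (hj : 1 ≤ j) (hjn : j ≤ n) :
    (j * m j - 2 * j + 1) * D j < D 0 := by
  obtain ⟨j, rfl⟩ := Nat.exists_eq_add_of_le' hj
  have hlower := (hD.one_le_and_le_sub hm hjn).2
  have htelescope := hD.succ_mul_sub_le_sub_zero hm hjn
  have hj0 : (0 : R) ≤ j := Nat.cast_nonneg j
  push_cast
  nlinarith

end IsTailContinuants

end TailContinuants

theorem tridiagDet_eq_det_tridiag (n : ℕ) (m : ℕ → ℤ) : tridiagDet n m = (tridiag n m).det := rfl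

theorem isTailContinuants_tridiagDet (n : ℕ) (hn : 1 ≤ n) (m : ℕ → ℤ) :
    IsTailContinuants n m (fun k => tridiagDet (n - k) (fun i => m (k + i))) where
  recurrence k hk := by
    obtain ⟨t, ht⟩ : ∃ t, n - k = t + 2 := ⟨n - k - 2, by omega⟩
    rw [ht, show n - (k + 1) = t + 1 by omega, show n - (k + 2) = t by omega]
    simp only [tridiagDet_eq_det_tridiag, det_tridiag_succ_succ]
    simp only [add_assoc, add_comm 1, add_comm 2]
  last := by simp [tridiagDet_eq_det_tridiag]
  penultimate := by
    rw [show n - (n - 1) = 1 by omega, tridiagDet_eq_det_tridiag, Matrix.det_unique]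
    simp [tridiag, Nat.sub_add_cancel hn]

/-- The inequality `Δ(Γ) > (j·m_j − 2j + 1)·Δ(Γ∖\overline{v_1v_j})` from the proof of
Lemma 3.3: for a chain with weights `m_1, …, m_n`, each `m_i ≥ 2`, one has
`det T(m_1, …, m_n) > (j·m_j − 2j + 1) · det T(m_{j+1}, …, m_n)` for all `1 ≤ j ≤ n`. -/
theorem tridiagDet_gt_weighted (n : ℕ) (hn : 1 ≤ n) (m : ℕ → ℤ)
    (hm : ∀ i, 1 ≤ i → i ≤ n → 2 ≤ m i) :
    ∀ j, 1 ≤ j → j ≤ n →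
      tridiagDet n m >
        ((j : ℤ) * m j - 2 * (j : ℤ) + 1) * tridiagDet (n - j) (fun i => m (j + i)) := by
  intro j hj hjn
  simpa using (isTailContinuants_tridiagDet n hn m).weighted_mul_lt_head hm hj hjn
end
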